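/- Let γ ⊆ E^{ef} be a paracel, let β be the set of all smoots for γ, and let Σ = E^{ef} ∖ (γ ∪ β). Then there exist disjoint subsets α, α' ⊆ Σ with α ∪ α' = Σ such that both α and α' are compatible with (β, γ). -/

import Mathlib

open Finset

section Defs

variable {V : Type*} {E : Type*}

/-- The graph on vertex set `V` whose adjacency is given by the edges in `F`
(a loop joins nothing). -/
def etaGraph (ends : E → Sym2 V) (F : Finset E) : SimpleGraph V where
  Adj v w := v ≠ w ∧ ∃ g ∈ F, ends g = s(v, w)
  symm := by
    constructor
    rintro v w ⟨hvw, g, hg, hends⟩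
    exact ⟨hvw.symm, g, hg, by rw [hends, Sym2.eq_swap]⟩
  loopless := by constructor; rintro v ⟨h, -⟩; exact h rfl

/-- `k(F)`: the number of connected components of `η(F)`. -/
noncomputable def kComp (ends : E → Sym2 V) (F : Finset E) : ℕ :=
  Nat.card (etaGraph ends F).ConnectedComponent

/-- The edge with endpoint pair `s` joins the connected component of `a`
with that of `b` in the graph `G`. -/
def Joins (G : SimpleGraph V) (s : Sym2 V) (a b : V) : Prop :=
  ∃ u v : V, s = s(u, v) ∧ G.Reachable a u ∧ G.Reachable b v

/-- `F ⊆ E^{ef}` is a paracel if `e` and `f` each join the same two distinct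
connected components of `η(F)`. -/
def IsParacel (ends : E → Sym2 V) (e f : E) (F : Finset E) : Prop :=
  e ∉ F ∧ f ∉ F ∧ ∃ a b : V,
    ¬ (etaGraph ends F).Reachable a b ∧
    Joins (etaGraph ends F) (ends e) a b ∧
    Joins (etaGraph ends F) (ends f) a b

/-- `g ∈ E^{ef} ∖ F` is a smoot for the paracel `F` if it joins the same two
connected components of `η(F)` as `e` and `f` do. -/
def IsSmoot (ends : E → Sym2 V) (e f : E) (F : Finset E) (g : E) : Prop :=
  g ∉ F ∧ g ≠ e ∧ g ≠ f ∧ ∃ a b : V,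
    ¬ (etaGraph ends F).Reachable a b ∧
    Joins (etaGraph ends F) (ends e) a b ∧
    Joins (etaGraph ends F) (ends f) a b ∧
    Joins (etaGraph ends F) (ends g) a b

variable [DecidableEq E]

/-- `α` is compatible with `(β, γ)`. -/
def Compatible (ends : E → Sym2 V) (e f : E) (β γ α : Finset E) : Prop :=
  e ∉ α ∧ f ∉ α ∧ Disjoint α β ∧ Disjoint α γ ∧
    IsParacel ends e f (γ ∪ α) ∧ ∀ g ∈ β, IsSmoot ends e f (γ ∪ α) g

/-- indicator function of a finite edge set, as an exponent vector. -/
def indic (A : Finset E) : E → ℕ := fun g => if g ∈ A then 1 else 0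

/-- `B_{β,γ}` as a set of exponent vectors `1_α + 1_{α'}` for twins `α, α'`. -/
def Bset (ends : E → Sym2 V) (e f : E) (β γ : Finset E) : Set (E → ℕ) :=
  { d | ∃ α α' : Finset E,
      Compatible ends e f β γ α ∧ Compatible ends e f β γ α' ∧
      Compatible ends e f β γ (α ∩ α') ∧ d = indic α + indic α' }

/-- `x^F = ∏_{g ∈ F} x_g`. -/
noncomputable def xF (A : Finset E) : MvPolynomial E ℤ := ∏ g ∈ A, MvPolynomial.X g

variable [Fintype E]

/-- `E^{ef} = E ∖ {e, f}`. -/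
def Eef (e f : E) : Finset E := Finset.univ \ {e, f}

/-- `x^d = ∏_g x_g^{d g}` for an exponent vector `d`. -/
noncomputable def xPow (d : E → ℕ) : MvPolynomial E ℤ := ∏ g : E, MvPolynomial.X g ^ d g

/-- `B_{β,γ}` as a finite set of exponent vectors, each counted once. -/
noncomputable def Bfin (ends : E → Sym2 V) (e f : E) (β γ : Finset E) :
    Finset (E → ℕ) := by
  classical
  exact (Finset.univ.filter (fun p : Finset E × Finset E =>
      Compatible ends e f β γ p.1 ∧ Compatible ends e f β γ p.2 ∧
      Compatible ends e f β γ (p.1 ∩ p.2))).image fun p => indic p.1 + indic p.2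

/-- `T_A^B = Σ_{A ⊆ F, F ∩ B = ∅} x^F q^{k(F)}` in `R = (MvPolynomial E ℤ)[q]`. -/
noncomputable def Tab (ends : E → Sym2 V) (A B : Finset E) :
    Polynomial (MvPolynomial E ℤ) :=
  ∑ F ∈ Finset.univ.filter (fun F : Finset E => A ⊆ F ∧ F ∩ B = ∅),
    Polynomial.C (xF F) * Polynomial.X ^ kComp ends F

/-- `D = T_e^f T_f^e − T_{ef} T^{ef}`. -/
noncomputable def Dpoly (ends : E → Sym2 V) (e f : E) :
    Polynomial (MvPolynomial E ℤ) :=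
  Tab ends {e} {f} * Tab ends {f} {e} - Tab ends {e, f} ∅ * Tab ends ∅ {e, f}

/-- The combinatorial sum
`S = Σ_{(β,γ) disjoint ⊆ E^{ef}} x^β x^γ Σ_{d ∈ B_{β,γ}} x^d`. -/
noncomputable def Ssum (ends : E → Sym2 V) (e f : E) : MvPolynomial E ℤ := by
  classical
  exact ∑ p ∈ Finset.univ.filter (fun p : Finset E × Finset E =>
      p.1 ⊆ Eef e f ∧ p.2 ⊆ Eef e f ∧ Disjoint p.1 p.2),
    xF p.1 * xF p.2 * ∑ d ∈ Bfin ends e f p.1 p.2, xPow d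

/-- `k₁(A,B) = k(A+e) + k(B+f)`. -/
noncomputable def kOne (ends : E → Sym2 V) (e f : E) (A B : Finset E) : ℕ :=
  kComp ends (insert e A) + kComp ends (insert f B)

/-- `k₂(A,B) = k(A+e+f) + k(B)`. -/
noncomputable def kTwo (ends : E → Sym2 V) (e f : E) (A B : Finset E) : ℕ :=
  kComp ends (insert f (insert e A)) + kComp ends B

/-- The coefficient of the monomial `x^lam` in an element of
`(MvPolynomial E ℤ)[q]`, as an element of `ℤ[q]`. -/
noncomputable def monCoeff (P : Polynomial (MvPolynomial E ℤ)) (lam : E →₀ ℕ) :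
    Polynomial ℤ :=
  P.sum fun n c => Polynomial.C (MvPolynomial.coeff lam c) * Polynomial.X ^ n

end Defs

section Aux

variable {V : Type*} {E : Type*}

lemma etaGraph_mono (ends : E → Sym2 V) {F F' : Finset E} (h : F ⊆ F') :
    etaGraph ends F ≤ etaGraph ends F' := by
  rintro v w ⟨hvw, g, hg, he⟩
  exact ⟨hvw, g, h hg, he⟩

lemma joins_mono {G G' : SimpleGraph V} (h : G ≤ G') {s : Sym2 V} {a b : V}
    (hj : Joins G s a b) : Joins G' s a b := by
  obtain ⟨u, v, hs, hu, hv⟩ := hj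
  exact ⟨u, v, hs, hu.mono h, hv.mono h⟩

lemma walk_closed {G : SimpleGraph V} {R : V → Prop}
    (hR : ∀ ⦃x y⦄, R x → G.Adj x y → R y) :
    ∀ {a b : V}, G.Walk a b → R a → R b := by
  intro a b w
  induction w with
  | nil => exact id
  | cons h p ih => exact fun ha => ih (hR ha h)

lemma joins_transfer {G : SimpleGraph V} {s t : Sym2 V} {a b a' b' : V}
    (hs : Joins G s a b) (hs' : Joins G s a' b') (ht : Joins G t a' b') :
    Joins G t a b := by
  obtain ⟨u, v, rfl, hu, hv⟩ := hs
  obtain ⟨u', v', hsuv, hu', hv'⟩ := hs'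
  obtain ⟨p, q, rfl, hp, hq⟩ := ht
  rw [Sym2.eq_iff] at hsuv
  rcases hsuv with ⟨h1, h2⟩ | ⟨h1, h2⟩
  · exact ⟨p, q, rfl, (hu.trans (h1 ▸ hu').symm).trans hp,
      (hv.trans (h2 ▸ hv').symm).trans hq⟩
  · exact ⟨q, p, Sym2.eq_swap, (hu.trans (h1 ▸ hv').symm).trans hq,
      (hv.trans (h2 ▸ hu').symm).trans hp⟩

lemma compat_aux [Fintype E] [DecidableEq E] {ends : E → Sym2 V} {e f : E}
    {γ β : Finset E} (hβ : ∀ g : E, g ∈ β ↔ IsSmoot ends e f γ g)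
    (heγ : e ∉ γ) (hfγ : f ∉ γ)
    {a b : V} (hab : ¬ (etaGraph ends γ).Reachable a b)
    (hJe : Joins (etaGraph ends γ) (ends e) a b)
    (hJf : Joins (etaGraph ends γ) (ends f) a b)
    {α : Finset E} (hsub : α ⊆ Eef e f \ (γ ∪ β))
    (hnr : ¬ (etaGraph ends (γ ∪ α)).Reachable a b) :
    Compatible ends e f β γ α := by
  have hα : ∀ g ∈ α, g ≠ e ∧ g ≠ f ∧ g ∉ γ ∧ g ∉ β := by
    intro g hg
    have := hsub hg
    simp only [Eef, Finset.mem_sdiff, Finset.mem_univ, true_and, Finset.mem_insert,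
      Finset.mem_singleton, Finset.mem_union, not_or] at this
    tauto
  have hmono : etaGraph ends γ ≤ etaGraph ends (γ ∪ α) :=
    etaGraph_mono ends Finset.subset_union_left
  have heα : e ∉ α := fun h => (hα e h).1 rfl
  have hfα : f ∉ α := fun h => (hα f h).2.1 rfl
  refine ⟨heα, hfα, Finset.disjoint_left.mpr fun g hg hg' => (hα g hg).2.2.2 hg',
    Finset.disjoint_left.mpr fun g hg hg' => (hα g hg).2.2.1 hg', ?_, ?_⟩
  · exact ⟨by simp [heγ, heα], by simp [hfγ, hfα], a, b, hnr,
      joins_mono hmono hJe, joins_mono hmono hJf⟩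
  · intro g hg
    obtain ⟨hgγ, hge, hgf, a', b', hab', hJe', hJf', hJg'⟩ := (hβ g).mp hg
    have hgα : g ∉ α := fun h => (hα g h).2.2.2 hg
    have hJg : Joins (etaGraph ends γ) (ends g) a b := joins_transfer hJe hJe' hJg'
    exact ⟨by simp [hgγ, hgα], hge, hgf, a, b, hnr, joins_mono hmono hJe,
      joins_mono hmono hJf, joins_mono hmono hJg⟩

end Aux

/-- if `γ` is a paracel and `β` is the set of all smoots for `γ`, then
the remaining edges `Σ = E^{ef} ∖ (γ ∪ β)` split into disjoint `α, α'` with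
`α ∪ α' = Σ`, both compatible with `(β, γ)`. -/
theorem stmt15 {V E : Type*} [Fintype V] [Fintype E] [DecidableEq E]
    (ends : E → Sym2 V) (e f : E) (hef : e ≠ f)
    (γ β : Finset E) (hγ : IsParacel ends e f γ)
    (hβ : ∀ g : E, g ∈ β ↔ IsSmoot ends e f γ g) :
    ∃ α α' : Finset E, Disjoint α α' ∧ α ∪ α' = Eef e f \ (γ ∪ β) ∧
      Compatible ends e f β γ α ∧ Compatible ends e f β γ α' := by
  classical
  obtain ⟨heγ, hfγ, a, b, hab, hJe, hJf⟩ := hγ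
  set Sig : Finset E := Eef e f \ (γ ∪ β) with hSig
  set P : E → Prop := fun g => ∃ p q : V, ends g = s(p, q) ∧
    (etaGraph ends γ).Reachable a p with hP
  have hSigβ : ∀ g ∈ Sig, g ∉ γ ∧ g ∉ β ∧ g ≠ e ∧ g ≠ f := by
    intro g hg
    simp only [hSig, Eef, Finset.mem_sdiff, Finset.mem_univ, true_and,
      Finset.mem_insert, Finset.mem_singleton, Finset.mem_union, not_or] at hg
    tauto
  refine ⟨Sig.filter P, Sig.filter (fun g => ¬ P g),
    Finset.disjoint_filter_filter_not _ _ _,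
    Finset.filter_union_filter_not_eq _ _, ?_, ?_⟩
  · -- α = edges of Sig touching the component of `a`
    refine compat_aux hβ heγ hfγ hab hJe hJf (Finset.filter_subset _ _) ?_
    set R : V → Prop := fun x => (etaGraph ends γ).Reachable a x ∨
      ∃ g ∈ Sig.filter P, ∃ p q : V, ends g = s(p, q) ∧
        (etaGraph ends γ).Reachable p x with hR
    have hclosed : ∀ ⦃x y : V⦄, R x → (etaGraph ends (γ ∪ Sig.filter P)).Adj x y → R y := by
      rintro x y hx ⟨hxy, g, hgmem, hends⟩
      rcases Finset.mem_union.mp hgmem with hgγ | hgα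
      · have hstep : (etaGraph ends γ).Reachable x y :=
          SimpleGraph.Adj.reachable ⟨hxy, g, hgγ, hends⟩
        rcases hx with h | ⟨g', hg', p, q, heq, hr⟩
        · exact Or.inl (h.trans hstep)
        · exact Or.inr ⟨g', hg', p, q, heq, hr.trans hstep⟩
      · exact Or.inr ⟨g, hgα, y, x, hends.trans Sym2.eq_swap, SimpleGraph.Reachable.refl y⟩
    intro hreach
    obtain ⟨w⟩ := hreach
    have hbR : R b := walk_closed hclosed w (Or.inl (SimpleGraph.Reachable.refl a))
    rcases hbR with h | ⟨g, hgα, p, q, hpq, hpb⟩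
    · exact hab h
    · obtain ⟨hgSig, p', q', hpq', hap'⟩ := Finset.mem_filter.mp hgα
      obtain ⟨hgγ, hgβ, hge, hgf⟩ := hSigβ g hgSig
      rcases Sym2.eq_iff.mp (hpq'.symm.trans hpq) with ⟨h1, h2⟩ | ⟨h1, h2⟩
      · exact hab ((h1 ▸ hap').trans hpb)
      · have hJg : Joins (etaGraph ends γ) (ends g) a b :=
          ⟨q, p, hpq.trans Sym2.eq_swap, h1 ▸ hap', hpb.symm⟩
        exact hgβ ((hβ g).mpr ⟨hgγ, hge, hgf, a, b, hab, hJe, hJf, hJg⟩)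
  · -- α' = edges of Sig not touching the component of `a`
    refine compat_aux hβ heγ hfγ hab hJe hJf (Finset.filter_subset _ _) ?_
    intro hreach
    obtain ⟨w⟩ := hreach
    have hclosed : ∀ ⦃x y : V⦄, (etaGraph ends γ).Reachable a x →
        (etaGraph ends (γ ∪ Sig.filter (fun g => ¬ P g))).Adj x y →
        (etaGraph ends γ).Reachable a y := by
      rintro x y hx ⟨hxy, g, hgmem, hends⟩
      rcases Finset.mem_union.mp hgmem with hgγ | hgα
      · exact hx.trans (SimpleGraph.Adj.reachable ⟨hxy, g, hgγ, hends⟩)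
      · exact absurd ⟨x, y, hends, hx⟩ (Finset.mem_filter.mp hgα).2
    exact hab (walk_closed hclosed w (SimpleGraph.Reachable.refl a))
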